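/- (Gauge invariance of QAOA amplitudes.) For every operator H on the n-qubit state space, every depth p ≥ 1, all parameter vectors γ, β ∈ ℝ^p, and all bitstrings x, y ∈ {0,1}^n, the QAOA output amplitudes of the gauge-transformed Hamiltonian H^y = P_y H P_y satisfy ⟨x| U(H^y; γ, β) |s⟩ = ⟨x ⊕ y| U(H; γ, β) |s⟩, where |s⟩ = |+⟩^{⊗n} is the uniform superposition initial state. Consequently, the probability of measuring the transformed bitstring x ⊕ y when running QAOA for H^y equals the probability of measuring x when running QAOA for H: |⟨x ⊕ y| U(H^y; γ, β) |s⟩|² = |⟨x| U(H; γ, β) |s⟩|². -/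

import Mathlib

open Matrix

/-- The computational basis state `|x⟩` on `n` qubits. -/
def ket {n : ℕ} (x : Fin n → Bool) : (Fin n → Bool) → ℂ :=
  fun z => if z = x then 1 else 0

/-- The Pauli `X` operator on qubit `j`, sending `|x⟩` to `|x ⊕ e_j⟩`. -/
def PauliX {n : ℕ} (j : Fin n) : Matrix (Fin n → Bool) (Fin n → Bool) ℂ :=
  fun a b => if a = (fun i => xor (b i) (if i = j then true else false)) then 1 else 0

/-- The bitflip operator `P_y`, the linear map sending `|x⟩` to `|x ⊕ y⟩`. -/
def bitflip {n : ℕ} (y : Fin n → Bool) : Matrix (Fin n → Bool) (Fin n → Bool) ℂ :=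
  fun a b => if a = (fun i => xor (b i) (y i)) then 1 else 0

/-- The uniform superposition state `|s⟩ = |+⟩^{⊗n} = 2^{-n/2} Σ_{x ∈ {0,1}^n} |x⟩`. -/
noncomputable def uniformState (n : ℕ) : (Fin n → Bool) → ℂ :=
  ((Real.sqrt 2 : ℂ) ^ n)⁻¹ • ∑ x : Fin n → Bool, ket x

/-- The QAOA phase separator `U_P(H; γ) = exp(-iγH)`. -/
noncomputable def phaseSep {n : ℕ} (H : Matrix (Fin n → Bool) (Fin n → Bool) ℂ) (γ : ℝ) :
    Matrix (Fin n → Bool) (Fin n → Bool) ℂ :=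
  NormedSpace.exp ((-(Complex.I * (γ : ℂ))) • H)

/-- The QAOA mixer `U_M(β) = exp(-iβ Σ_j X_j)`. -/
noncomputable def mixer (n : ℕ) (β : ℝ) : Matrix (Fin n → Bool) (Fin n → Bool) ℂ :=
  NormedSpace.exp ((-(Complex.I * (β : ℂ))) • ∑ j : Fin n, PauliX j)

/-- The depth-`p` QAOA circuit `U(H; γ, β) = ∏_{l=p}^{1} U_M(β_l) U_P(H; γ_l)`,
with the `l = 1` layer acting first (i.e. appearing rightmost in the product). -/
noncomputable def qaoaCircuit {n : ℕ} (H : Matrix (Fin n → Bool) (Fin n → Bool) ℂ)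
    (p : ℕ) (γ β : Fin p → ℝ) : Matrix (Fin n → Bool) (Fin n → Bool) ℂ :=
  ((List.ofFn (fun l : Fin p => mixer n (β l) * phaseSep H (γ l))).reverse).prod

open scoped symmDiff

/-!
`P_y` is the permutation matrix of the translation `x ↦ x ⊕ y` of the Boolean group `{0,1}ⁿ`
(with `⊕` written as `∆`), so `P_y P_z = P_{y ⊕ z}`. Hence `P_y` is an involution commuting
with every `X_j = P_{e_j}`, and conjugation by it fixes the mixer and passes through `exp` and
through the product of layers: `U(H^y; γ, β) = P_y U(H; γ, β) P_y`. Finally `P_y |s⟩ = |s⟩` and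
`⟨x| P_y = ⟨x ⊕ y|`.
-/

theorem conj_mul_conj_of_mul_self_eq_one {M : Type*} [Monoid M] {P : M} (hP : P * P = 1)
    (A B : M) : P * A * P * (P * B * P) = P * (A * B) * P := by
  calc P * A * P * (P * B * P) = P * A * (P * P) * B * P := by simp only [mul_assoc]
    _ = P * (A * B) * P := by rw [hP, mul_one, mul_assoc P A]

theorem List.prod_map_conj_of_mul_self_eq_one {M : Type*} [Monoid M] {P : M} (hP : P * P = 1)
    (L : List M) : (L.map fun A => P * A * P).prod = P * L.prod * P := by
  induction L with
  | nil => simpa using hP.symm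
  | cons A L ih =>
    rw [List.map_cons, List.prod_cons, ih, List.prod_cons, conj_mul_conj_of_mul_self_eq_one hP]

theorem Matrix.exp_conj_of_mul_self_eq_one {m 𝔸 : Type*} [Fintype m] [DecidableEq m]
    [NormedRing 𝔸] [NormedAlgebra ℚ 𝔸] [CompleteSpace 𝔸] {P : Matrix m m 𝔸} (hP : P * P = 1)
    (A : Matrix m m 𝔸) : NormedSpace.exp (P * A * P) = P * NormedSpace.exp A * P :=
  Matrix.exp_units_conj ⟨P, P, hP, hP⟩ A

theorem Pi.xor_eq_symmDiff {ι : Type*} (a b : ι → Bool) : (fun i => xor (a i) (b i)) = a ∆ b :=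
  funext fun i => (Bool.symmDiff_eq_xor (a i) (b i)).symm

variable {n : ℕ}

def xorPerm (y : Fin n → Bool) : Equiv.Perm (Fin n → Bool) :=
  (symmDiff_left_involutive y).toPerm _

theorem bitflip_eq_toMatrix (y : Fin n → Bool) : bitflip y = (xorPerm y).toPEquiv.toMatrix := by
  ext a b
  simp only [bitflip, PEquiv.toMatrix_apply, Equiv.toPEquiv_apply, Option.mem_def,
    Option.some.injEq, xorPerm, Function.Involutive.coe_toPerm, Pi.xor_eq_symmDiff,
    (symmDiff_left_involutive y).eq_iff]

theorem bitflip_mul_bitflip (y z : Fin n → Bool) : bitflip y * bitflip z = bitflip (y ∆ z) := by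
  rw [bitflip_eq_toMatrix, bitflip_eq_toMatrix, bitflip_eq_toMatrix, ← PEquiv.toMatrix_trans,
    ← Equiv.toPEquiv_trans]
  congr
  ext a : 1
  exact symmDiff_assoc a y z

theorem bitflip_mul_self (y : Fin n → Bool) : bitflip y * bitflip y = 1 := by
  have xorPerm_bot : xorPerm (⊥ : Fin n → Bool) = Equiv.refl _ := Equiv.ext symmDiff_bot
  rw [bitflip_mul_bitflip, symmDiff_self, bitflip_eq_toMatrix, xorPerm_bot, Equiv.toPEquiv_refl,
    PEquiv.toMatrix_refl]

theorem bitflip_mulVec (y : Fin n → Bool) (v : (Fin n → Bool) → ℂ) :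
    bitflip y *ᵥ v = fun a => v (a ∆ y) := by
  rw [bitflip_eq_toMatrix, PEquiv.toMatrix_toPEquiv_mulVec]
  rfl

theorem PauliX_eq_bitflip (j : Fin n) : PauliX j = bitflip fun i => if i = j then true else false :=
  rfl

theorem bitflip_conj_mixer (y : Fin n → Bool) (β : ℝ) :
    bitflip y * mixer n β * bitflip y = mixer n β := by
  rw [mixer, ← Matrix.exp_conj_of_mul_self_eq_one (bitflip_mul_self y), Matrix.mul_smul,
    Matrix.smul_mul, Finset.mul_sum, Finset.sum_mul]
  simp only [PauliX_eq_bitflip, bitflip_mul_bitflip, symmDiff_symmDiff_self']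

theorem phaseSep_bitflip_conj (y : Fin n → Bool) (H : Matrix (Fin n → Bool) (Fin n → Bool) ℂ)
    (γ : ℝ) : phaseSep (bitflip y * H * bitflip y) γ = bitflip y * phaseSep H γ * bitflip y := by
  rw [phaseSep, phaseSep, ← Matrix.exp_conj_of_mul_self_eq_one (bitflip_mul_self y),
    Matrix.mul_smul, Matrix.smul_mul]

theorem qaoaCircuit_bitflip_conj (y : Fin n → Bool) (H : Matrix (Fin n → Bool) (Fin n → Bool) ℂ)
    (p : ℕ) (γ β : Fin p → ℝ) :
    qaoaCircuit (bitflip y * H * bitflip y) p γ β =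
      bitflip y * qaoaCircuit H p γ β * bitflip y := by
  have layer (l : Fin p) : mixer n (β l) * phaseSep (bitflip y * H * bitflip y) (γ l) =
      bitflip y * (mixer n (β l) * phaseSep H (γ l)) * bitflip y := by
    rw [phaseSep_bitflip_conj, ← conj_mul_conj_of_mul_self_eq_one (bitflip_mul_self y),
      bitflip_conj_mixer]
  rw [qaoaCircuit, qaoaCircuit, ← List.prod_map_conj_of_mul_self_eq_one (bitflip_mul_self y),
    List.map_reverse, List.map_ofFn]
  simp only [Function.comp_def, layer]

theorem uniformState_apply (a : Fin n → Bool) : uniformState n a = ((Real.sqrt 2 : ℂ) ^ n)⁻¹ := by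
  simp [uniformState, ket, Finset.sum_apply]

theorem bitflip_mulVec_uniformState (y : Fin n → Bool) :
    bitflip y *ᵥ uniformState n = uniformState n := by
  rw [bitflip_mulVec]
  ext a
  exact (uniformState_apply _).trans (uniformState_apply a).symm

theorem ket_eq_single (x : Fin n → Bool) : ket x = Pi.single x 1 :=
  funext fun z => (Pi.single_apply x 1 z).symm

theorem star_ket_dotProduct (x : Fin n → Bool) (v : (Fin n → Bool) → ℂ) :
    star (ket x) ⬝ᵥ v = v x := by
  rw [ket_eq_single, Pi.star_single, star_one, single_one_dotProduct]

theorem qaoa_amplitude_bitflip_conj (H : Matrix (Fin n → Bool) (Fin n → Bool) ℂ) (p : ℕ)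
    (γ β : Fin p → ℝ) (x y : Fin n → Bool) :
    star (ket x) ⬝ᵥ (qaoaCircuit (bitflip y * H * bitflip y) p γ β *ᵥ uniformState n) =
      star (ket (x ∆ y)) ⬝ᵥ (qaoaCircuit H p γ β *ᵥ uniformState n) := by
  rw [qaoaCircuit_bitflip_conj, ← mulVec_mulVec, ← mulVec_mulVec, bitflip_mulVec_uniformState,
    star_ket_dotProduct, bitflip_mulVec, star_ket_dotProduct]

theorem qaoa_amplitudes_gauge_general {n : ℕ} (H : Matrix (Fin n → Bool) (Fin n → Bool) ℂ)
    (p : ℕ) (γ β : Fin p → ℝ) (x y : Fin n → Bool) :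
    (star (ket x) ⬝ᵥ
        (qaoaCircuit (bitflip y * H * bitflip y) p γ β *ᵥ uniformState n) =
      star (ket (fun i => xor (x i) (y i))) ⬝ᵥ (qaoaCircuit H p γ β *ᵥ uniformState n)) ∧
    (‖star (ket (fun i => xor (x i) (y i))) ⬝ᵥ
        (qaoaCircuit (bitflip y * H * bitflip y) p γ β *ᵥ uniformState n)‖ ^ 2 =
      ‖star (ket x) ⬝ᵥ (qaoaCircuit H p γ β *ᵥ uniformState n)‖ ^ 2) := by
  rw [Pi.xor_eq_symmDiff]
  refine ⟨qaoa_amplitude_bitflip_conj H p γ β x y, ?_⟩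
  rw [qaoa_amplitude_bitflip_conj, symmDiff_symmDiff_cancel_right]

/-- Gauge invariance of QAOA amplitudes: `⟨x| U(H^y; γ, β) |s⟩ = ⟨x ⊕ y| U(H; γ, β) |s⟩`,
and consequently the output probabilities satisfy
`|⟨x ⊕ y| U(H^y; γ, β) |s⟩|² = |⟨x| U(H; γ, β) |s⟩|²`. -/
theorem qaoa_amplitudes_gauge {n : ℕ} (H : Matrix (Fin n → Bool) (Fin n → Bool) ℂ)
    (p : ℕ) (hp : 1 ≤ p) (γ β : Fin p → ℝ) (x y : Fin n → Bool) :
    (star (ket x) ⬝ᵥ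
        (qaoaCircuit (bitflip y * H * bitflip y) p γ β *ᵥ uniformState n) =
      star (ket (fun i => xor (x i) (y i))) ⬝ᵥ (qaoaCircuit H p γ β *ᵥ uniformState n)) ∧
    (‖star (ket (fun i => xor (x i) (y i))) ⬝ᵥ
        (qaoaCircuit (bitflip y * H * bitflip y) p γ β *ᵥ uniformState n)‖ ^ 2 =
      ‖star (ket x) ⬝ᵥ (qaoaCircuit H p γ β *ᵥ uniformState n)‖ ^ 2) :=
  qaoa_amplitudes_gauge_general H p γ β x y
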